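/- Let T = (S, A, T) be a complete, reversible Turing machine with states s₁, …, s_m and tape symbols a₁, …, aₙ, and let F : S × A^ℤ → S × A^ℤ be its transition function (the bijection whose graph is the transition relation). Choose nonempty finite binary strings σ₁, …, σ_m such that the dyadic intervals I(σ₁), …, I(σ_m) partition C, and nonempty finite binary strings α₁, …, αₙ such that I(α₁), …, I(αₙ) partition C. Let ε : A^∞ → C be the bijection ε(a_{i₁}, a_{i₂}, …) = α_{i₁}α_{i₂}⋯, and let Φ : S × A^ℤ → C² be the configuration encoding Φ(s_i, τ) = (σ_i ε(τ_L), ε(τ_R)), where τ_L = (τ(−1), τ(−2), τ(−3), …) and τ_R = (τ(0), τ(1), τ(2), …). Then Φ is a bijection and the map f_T = Φ ∘ F ∘ Φ⁻¹ : C² → C² is an element of the Brin–Thompson group 2V. -/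

import Mathlib

/-- The Cantor space of infinite binary sequences. -/
abbrev Cantor : Type := ℕ → Bool

/-- Concatenation of a finite binary string with an infinite binary sequence. -/
def cat (α : List Bool) (ω : Cantor) : Cantor := fun k =>
  if h : k < α.length then α.get ⟨k, h⟩ else ω (k - α.length)

/-- The dyadic interval `I(α)`: all infinite binary sequences with prefix `α`. -/
def dyadicI (α : List Bool) : Set Cantor := Set.range (cat α)

/-- The dyadic rectangle `R(α, β) = I(α) × I(β)` in `C²`. -/
def rect (α β : List Bool) : Set (Cantor × Cantor) :=
  {p | (∃ ψ, p.1 = cat α ψ) ∧ ∃ ω, p.2 = cat β ω}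

/-- A finite list of dyadic rectangles forms a dyadic subdivision of `C²`. -/
def IsSubdivision (L : List (List Bool × List Bool)) : Prop :=
  (⋃ r ∈ L, rect r.1 r.2) = Set.univ ∧
    List.Pairwise (fun r s => Disjoint (rect r.1 r.2) (rect s.1 s.2)) L

/-- A numbered pattern pair for `2V`. -/
abbrev PatternPair : Type := List ((List Bool × List Bool) × (List Bool × List Bool))

/-- The numbered pattern pair `pp` represents the map `f`: domains and ranges each form
dyadic subdivisions, and `f` maps each domain rectangle to the corresponding range
rectangle by prefix replacement. -/
def Represents (pp : PatternPair) (f : Cantor × Cantor → Cantor × Cantor) : Prop :=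
  IsSubdivision (pp.map Prod.fst) ∧ IsSubdivision (pp.map Prod.snd) ∧
    ∀ r ∈ pp, ∀ ψ ω : Cantor,
      f (cat r.1.1 ψ, cat r.1.2 ω) = (cat r.2.1 ψ, cat r.2.2 ω)

/-- Membership in the Brin–Thompson group `2V`, viewed inside the permutation group of
`C²`: a homeomorphism acting by prefix replacements on the rectangles of some dyadic
subdivision. -/
def MemTwoV (f : Equiv.Perm (Cantor × Cantor)) : Prop :=
  Continuous ⇑f ∧ Continuous ⇑f.symm ∧ ∃ pp : PatternPair, Represents pp ⇑f

/-- The two movement directions for a Turing machine head. -/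
inductive Dir : Type
  | left : Dir
  | right : Dir

/-- A Turing machine with state set `S` and tape alphabet `A`: a transition table
consisting of move instructions and write instructions. -/
structure TuringMachine (S A : Type) where
  /-- The move instructions `(s, δ, s')`. -/
  moves : Set (S × Dir × S)
  /-- The write instructions `(s, a, s', a')`. -/
  writes : Set (S × A × S × A)

/-- Shifting the tape: moving the head in direction `δ`. -/
def shiftTape {A : Type} (δ : Dir) (τ : ℤ → A) : ℤ → A := fun n =>
  match δ with
  | Dir.left => τ (n - 1)
  | Dir.right => τ (n + 1)

/-- Writing the symbol `a'` at position `0` of the tape. -/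
def writeTape {A : Type} (a' : A) (τ : ℤ → A) : ℤ → A := fun n =>
  if n = 0 then a' else τ n

/-- The transition relation on the configuration space `S × A^ℤ`. -/
def TMStep {S A : Type} (M : TuringMachine S A) (c c' : S × (ℤ → A)) : Prop :=
  (∃ δ : Dir, (c.1, δ, c'.1) ∈ M.moves ∧ c'.2 = shiftTape δ c.2) ∨
    (∃ a a' : A, (c.1, a, c'.1, a') ∈ M.writes ∧ c.2 0 = a ∧ c'.2 = writeTape a' c.2)

/-- The machine is deterministic: every configuration has at most one successor. -/
def Deterministic {S A : Type} (M : TuringMachine S A) : Prop :=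
  ∀ c c₁ c₂, TMStep M c c₁ → TMStep M c c₂ → c₁ = c₂

/-- The machine is reversible: deterministic with at most one predecessor for each
configuration. -/
def Reversible {S A : Type} (M : TuringMachine S A) : Prop :=
  Deterministic M ∧ ∀ c₁ c₂ c', TMStep M c₁ c' → TMStep M c₂ c' → c₁ = c₂

/-- The machine is complete: every configuration has at least one successor. -/
def Complete {S A : Type} (M : TuringMachine S A) : Prop :=
  ∀ c, ∃ c', TMStep M c c'

/-- The infinite concatenation `ε(x) = α (x 0) α (x 1) α (x 2) ⋯`. -/
def epsConcat {n : ℕ} (α : Fin n → List Bool) (x : ℕ → Fin n) : Cantor := fun m =>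
  (((List.range (m + 1)).map fun i => α (x i)).flatten).getD m false

/-- The configuration encoding `Φ(s, τ) = (σ_s ε(τ_L), ε(τ_R))`, where
`τ_L = (τ(-1), τ(-2), …)` and `τ_R = (τ(0), τ(1), …)`. -/
def Phi {m n : ℕ} (σ : Fin m → List Bool) (α : Fin n → List Bool)
    (c : Fin m × (ℤ → Fin n)) : Cantor × Cantor :=
  (cat (σ c.1) (epsConcat α fun k => c.2 (-(k + 1 : ℕ))),
    epsConcat α fun k => c.2 (k : ℕ))

/-!
In a fixed state a deterministic machine either moves regardless of the tape or writes as a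
function of the scanned symbol. So on the dyadic rectangle `R(σ_s α_b, α_a)` of configurations
in state `s` scanning `a` with `b` to its left, `f_T` only rewrites the codes of these two
cells and the state: it is a prefix replacement. These rectangles form a dyadic subdivision
because `σ` and `α` are dyadic partitions, and so do their images because `f_T` is a bijection.
-/

open Function Stream' Topology

section Cat

lemma cat_apply_lt (γ : List Bool) (ω : Cantor) {k : ℕ} (h : k < γ.length) :
    cat γ ω k = γ[k] := dif_pos h

lemma cat_apply_of_le (γ : List Bool) (ω : Cantor) {k : ℕ} (h : γ.length ≤ k) :
    cat γ ω k = ω (k - γ.length) := dif_neg (Nat.not_lt.2 h)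

lemma cat_apply_add_length (γ : List Bool) (ω : Cantor) (k : ℕ) :
    cat γ ω (k + γ.length) = ω k := by
  rw [cat_apply_of_le _ _ (Nat.le_add_left _ _), Nat.add_sub_cancel]

lemma cat_injective (γ : List Bool) : Injective (cat γ) := fun ψ ψ' h =>
  funext fun k => by simpa only [cat_apply_add_length] using congrFun h (k + γ.length)

@[simp] lemma cat_nil (ω : Cantor) : cat [] ω = ω := by
  funext k; simp [cat]

lemma cat_append (γ δ : List Bool) (ω : Cantor) : cat (γ ++ δ) ω = cat γ (cat δ ω) := by
  funext k
  rcases Nat.lt_or_ge k γ.length with h | h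
  · rw [cat_apply_lt _ _ (by simp; omega), cat_apply_lt _ _ h, List.getElem_append_left h]
  · rw [cat_apply_of_le _ _ h]
    rcases Nat.lt_or_ge k (γ ++ δ).length with h' | h' <;> rw [List.length_append] at h'
    · rw [cat_apply_lt _ _ (by simpa), cat_apply_lt _ _ (by omega), List.getElem_append_right h]
    · rw [cat_apply_of_le _ _ (by simpa), cat_apply_of_le _ _ (by omega), List.length_append,
        Nat.sub_sub]

lemma continuous_cat (γ : List Bool) : Continuous (cat γ) := by
  refine continuous_pi fun k => ?_
  rcases Nat.lt_or_ge k γ.length with h | h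
  · simp_rw [cat_apply_lt γ _ h]
    exact continuous_const
  · simp_rw [cat_apply_of_le γ _ h]
    exact continuous_apply _

lemma bijective_uncurry_cat {ι : Type*} {β : ι → List Bool}
    (hcover : (⋃ i, dyadicI (β i)) = Set.univ)
    (hdisj : Pairwise fun i j => Disjoint (dyadicI (β i)) (dyadicI (β j))) :
    Bijective (uncurry fun i => cat (β i)) := by
  refine ⟨fun ⟨i, ψ⟩ ⟨j, ψ'⟩ h => ?_, fun x => ?_⟩
  · obtain rfl : i = j := by
      by_contra hij
      exact Set.disjoint_left.1 (hdisj hij) ⟨ψ, rfl⟩ ⟨ψ', h.symm⟩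
    exact congrArg _ (cat_injective _ h)
  · obtain ⟨i, ψ, hψ⟩ := Set.mem_iUnion.1 (hcover.symm ▸ Set.mem_univ x)
    exact ⟨(i, ψ), hψ⟩

end Cat

section EpsConcat

variable {n : ℕ} {α : Fin n → List Bool}

lemma le_length_flatten_range (hαne : ∀ i, α i ≠ []) (x : ℕ → Fin n) (N : ℕ) :
    N ≤ ((List.range N).map fun i => α (x i)).flatten.length := by
  induction N with
  | zero => simp
  | succ N ih =>
    have := List.length_pos_iff.2 (hαne (x N))
    simp only [List.range_succ, List.map_append, List.flatten_append, List.length_append,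
      List.map_cons, List.map_nil, List.flatten_cons, List.flatten_nil, List.append_nil]
    omega

lemma epsConcat_eq_getD (hαne : ∀ i, α i ≠ []) (x : ℕ → Fin n) {k N : ℕ} (h : k < N) :
    epsConcat α x k = ((List.range N).map fun i => α (x i)).flatten.getD k false := by
  induction N with
  | zero => omega
  | succ N ih =>
    rcases Nat.lt_or_ge k N with h' | h'
    · rw [ih h', List.range_succ, List.map_append, List.flatten_append, List.getD_append]
      exact h'.trans_le (le_length_flatten_range hαne x N)
    · obtain rfl : N = k := by omega
      rfl

lemma epsConcat_cons (hαne : ∀ i, α i ≠ []) (a : Fin n) (x : Stream' (Fin n)) :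
    epsConcat α (a :: x) = cat (α a) (epsConcat α x) := by
  funext k
  have hflat : ((List.range (k + 1)).map fun i => α ((a :: x) i)).flatten
      = α a ++ ((List.range k).map fun i => α (x i)).flatten := by
    rw [List.range_succ_eq_map, List.map_cons, List.map_map, List.flatten_cons]
    rfl
  change ((List.range (k + 1)).map fun i => α ((a :: x) i)).flatten.getD k false = _
  rw [hflat]
  rcases Nat.lt_or_ge k (α a).length with h | h
  · rw [cat_apply_lt _ _ h, List.getD_append _ _ _ _ h, List.getD_eq_getElem _ _ h]
  · have := List.length_pos_iff.2 (hαne a)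
    rw [cat_apply_of_le _ _ h, List.getD_append_right _ _ _ _ h,
      epsConcat_eq_getD hαne x (show k - (α a).length < k by omega)]

lemma epsConcat_append (hαne : ∀ i, α i ≠ []) (u : List (Fin n)) (x : Stream' (Fin n)) :
    epsConcat α (u ++ₛ x) = cat (u.flatMap α) (epsConcat α x) := by
  induction u with
  | nil => simp
  | cons a u ih => rw [cons_append_stream, epsConcat_cons hαne, ih, List.flatMap_cons, cat_append]

lemma injective_epsConcat (hαne : ∀ i, α i ≠ [])
    (hα : Injective (uncurry fun i => cat (α i))) : Injective (epsConcat α) := by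
  have hcons (x y : Stream' (Fin n)) (h : epsConcat α x = epsConcat α y) :
      x.head = y.head ∧ epsConcat α x.tail = epsConcat α y.tail := by
    rw [← Stream'.eta x, ← Stream'.eta y, epsConcat_cons hαne, epsConcat_cons hαne] at h
    exact Prod.ext_iff.1 (@hα (x.head, epsConcat α x.tail) (y.head, epsConcat α y.tail) h)
  suffices ∀ k (x y : Stream' (Fin n)), epsConcat α x = epsConcat α y → x k = y k from
    fun x y h => funext fun k => this k x y h
  intro k
  induction k with
  | zero => exact fun x y h => (hcons x y h).1
  | succ k ih => exact fun x y h => ih _ _ (hcons x y h).2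

/-- The preimage of `y` is read off by repeatedly splitting off the interval `α i`
containing the current remainder. -/
lemma surjective_epsConcat (hαne : ∀ i, α i ≠ [])
    (hα : Surjective (uncurry fun i => cat (α i))) : Surjective (epsConcat α) := by
  let split := surjInv hα
  have hsplit (y : Cantor) : cat (α (split y).1) (split y).2 = y := surjInv_eq hα y
  suffices ∀ k y, epsConcat α (corec (fun y => (split y).1) (fun y => (split y).2) y) k = y k
    from fun y => ⟨_, funext fun k => this k y⟩
  intro k
  induction k using Nat.strong_induction_on with
  | _ k ih =>
    intro y
    rw [corec_eq, epsConcat_cons hαne]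
    conv_rhs => rw [← hsplit y]
    rcases Nat.lt_or_ge k (α (split y).1).length with h | h
    · rw [cat_apply_lt _ _ h, cat_apply_lt _ _ h]
    · have := List.length_pos_iff.2 (hαne (split y).1)
      rw [cat_apply_of_le _ _ h, cat_apply_of_le _ _ h]
      exact ih _ (by omega) _

lemma bijective_epsConcat (hαne : ∀ i, α i ≠ [])
    (hα : Bijective (uncurry fun i => cat (α i))) : Bijective (epsConcat α) :=
  ⟨injective_epsConcat hαne hα.1, surjective_epsConcat hαne hα.2⟩

end EpsConcat

section Tape

variable {A : Type}

/-- The two-sided tape with `τ(-k-1) = l k` and `τ(k) = r k`. -/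
def joinTape (l r : Stream' A) : ℤ → A
  | .ofNat k => r k
  | .negSucc k => l k

def splitTape : (ℤ → A) ≃ Stream' A × Stream' A where
  toFun τ := (fun k => τ (-(k + 1 : ℕ)), fun k => τ (k : ℕ))
  invFun p := joinTape p.1 p.2
  left_inv τ := by
    funext z
    cases z with
    | ofNat k => rfl
    | negSucc k => rfl
  right_inv p := rfl

lemma shiftTape_right_joinTape (l r : Stream' A) (a : A) :
    shiftTape .right (joinTape l (a :: r)) = joinTape (a :: l) r := by
  funext z
  rcases z with k | (_ | k) <;> rfl

lemma shiftTape_left_joinTape (l r : Stream' A) (b : A) :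
    shiftTape .left (joinTape (b :: l) r) = joinTape l (b :: r) := by
  funext z
  rcases z with (_ | k) | k
  · rfl
  · have hk : Int.ofNat (k + 1) - 1 = Int.ofNat k := by
      simp only [Int.ofNat_eq_natCast]
      omega
    exact congrArg (joinTape (b :: l) r) hk
  · rfl

lemma writeTape_joinTape (l r : Stream' A) (a c : A) :
    writeTape c (joinTape l (a :: r)) = joinTape l (c :: r) := by
  funext z
  rcases z with (_ | k) | k <;> rfl

lemma shiftTape_surjective (δ : Dir) : Surjective (shiftTape (A := A) δ) := by
  intro τ
  cases δ
  · exact ⟨shiftTape .right τ, funext fun z => congrArg τ (by omega)⟩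
  · exact ⟨shiftTape .left τ, funext fun z => congrArg τ (by omega)⟩

lemma writeTape_writeTape (a b : A) (τ : ℤ → A) :
    writeTape b (writeTape a τ) = writeTape b τ := by
  funext z
  simp only [writeTape]
  split_ifs <;> rfl

lemma writeTape_apply_zero_self (τ : ℤ → A) : writeTape (τ 0) τ = τ := by
  funext z
  simp only [writeTape]
  split_ifs with h
  · rw [h]
  · rfl

end Tape

section Encoding

variable {m n : ℕ} {σ : Fin m → List Bool} {α : Fin n → List Bool}

lemma Phi_eq_comp_splitTape (σ : Fin m → List Bool) (α : Fin n → List Bool) :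
    Phi σ α = Prod.map (uncurry fun i => cat (σ i)) id ∘ (Equiv.prodAssoc _ _ _).symm ∘
      Prod.map id (Prod.map (epsConcat α) (epsConcat α)) ∘ Prod.map id splitTape :=
  rfl

lemma bijective_Phi (hσ : Bijective (uncurry fun i => cat (σ i)))
    (hε : Bijective (epsConcat α)) : Bijective (Phi σ α) := by
  rw [Phi_eq_comp_splitTape]
  exact (hσ.prodMap bijective_id).comp <| (Equiv.bijective _).comp <|
    (bijective_id.prodMap (hε.prodMap hε)).comp (bijective_id.prodMap splitTape.bijective)

lemma Phi_joinTape_append (hαne : ∀ i, α i ≠ []) (s : Fin m) (u v : List (Fin n))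
    (l r : Stream' (Fin n)) :
    Phi σ α (s, joinTape (u ++ₛ l) (v ++ₛ r)) =
      (cat (σ s ++ u.flatMap α) (epsConcat α l), cat (v.flatMap α) (epsConcat α r)) := by
  change (cat (σ s) (epsConcat α (u ++ₛ l)), epsConcat α (v ++ₛ r)) = _
  rw [epsConcat_append hαne, epsConcat_append hαne, cat_append]

end Encoding

section Machine

variable {S A : Type}

/-- What a deterministic machine does in a fixed state: either it moves regardless of the
tape, or it writes and changes state according to the scanned symbol. -/
inductive Rule (S A : Type) : Type
  | move (δ : Dir) (t : S)
  | write (w : A → S × A)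

namespace Rule

def run : Rule S A → (ℤ → A) → S × (ℤ → A)
  | move δ t, τ => (t, shiftTape δ τ)
  | write w, τ => ((w (τ 0)).1, writeTape (w (τ 0)).2 τ)

/-- The new state, together with the new content of the scanned cell when it held `a`. -/
def cellMap : Rule S A → A → S × A
  | move _ t, a => (t, a)
  | write w, a => w a

lemma exists_run_eq_const (R : Rule S A) (a : A) :
    ∃ τ : ℤ → A, τ 0 = a ∧ R.run τ = ((R.cellMap a).1, fun _ => (R.cellMap a).2) := by
  cases R with
  | move δ t => exact ⟨fun _ => a, rfl, by cases δ <;> rfl⟩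
  | write w =>
    refine ⟨writeTape a fun _ => (w a).2, rfl, ?_⟩
    change ((w a).1, writeTape (w a).2 (writeTape a fun _ => (w a).2)) = _
    rw [writeTape_writeTape]
    exact congrArg _ (writeTape_apply_zero_self _)

lemma exists_run_eq (R : Rule S A) (a : A) (τ' : ℤ → A) (h : τ' 0 = (R.cellMap a).2) :
    ∃ τ : ℤ → A, R.run τ = ((R.cellMap a).1, τ') := by
  cases R with
  | move δ t =>
    obtain ⟨τ, rfl⟩ := shiftTape_surjective δ τ'
    exact ⟨τ, rfl⟩
  | write w =>
    refine ⟨writeTape a τ', ?_⟩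
    change ((w a).1, writeTape (w a).2 (writeTape a τ')) = _
    rw [writeTape_writeTape, ← show τ' 0 = (w a).2 from h, writeTape_apply_zero_self]
    rfl

/-- Injectivity on configurations forces injectivity of the finite map
`(s, a) ↦ (R s).cellMap a`, hence its surjectivity, from which every configuration is
seen to have a preimage. -/
theorem surjective_run_of_injective [Finite S] [Finite A] (R : S → Rule S A)
    (h : Injective fun c : S × (ℤ → A) => (R c.1).run c.2) :
    Surjective fun c : S × (ℤ → A) => (R c.1).run c.2 := by
  have hcell : Injective fun p : S × A => (R p.1).cellMap p.2 := by
    rintro ⟨s, a⟩ ⟨s', a'⟩ hsa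
    obtain ⟨τ, rfl, hτ⟩ := (R s).exists_run_eq_const a
    obtain ⟨τ', rfl, hτ'⟩ := (R s').exists_run_eq_const a'
    obtain ⟨rfl, rfl⟩ := Prod.ext_iff.1 (@h (s, τ) (s', τ') (by simp_all))
    rfl
  rintro ⟨s', τ'⟩
  obtain ⟨⟨s, a⟩, hsa⟩ := Finite.injective_iff_surjective.1 hcell (s', τ' 0)
  obtain ⟨τ, hτ⟩ := (R s).exists_run_eq a τ' (by simp [hsa])
  exact ⟨(s, τ), by simp_all⟩

/-- The cells around the head before (`b`, `a` at positions `-1`, `0`) are replaced after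
one step by the new state, the symbols pushed onto the left half and those pushed onto the
right half. -/
def window : Rule S A → A → A → S × List A × List A
  | move .right t, a, b => (t, [a, b], [])
  | move .left t, a, b => (t, [], [b, a])
  | write w, a, b => ((w a).1, [b], [(w a).2])

lemma run_joinTape (R : Rule S A) (a b : A) (l r : Stream' A) :
    R.run (joinTape (b :: l) (a :: r)) =
      ((R.window a b).1, joinTape ((R.window a b).2.1 ++ₛ l) ((R.window a b).2.2 ++ₛ r)) := by
  rcases R with (_ | _) | w
  · exact congrArg _ (shiftTape_left_joinTape _ _ _)
  · exact congrArg _ (shiftTape_right_joinTape _ _ _)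
  · exact congrArg _ (writeTape_joinTape _ _ _ _)

end Rule

variable {M : TuringMachine S A} {F : S × (ℤ → A) → S × (ℤ → A)}

lemma exists_rule (hF : ∀ c c', TMStep M c c' ↔ c' = F c) (s : S) :
    ∃ R : Rule S A, ∀ τ, F (s, τ) = R.run τ := by
  by_cases hmove : ∃ δ t, (s, δ, t) ∈ M.moves
  · obtain ⟨δ, t, hm⟩ := hmove
    exact ⟨.move δ t, fun τ => ((hF _ _).1 (Or.inl ⟨δ, hm, rfl⟩)).symm⟩
  · have hwrite (a : A) : ∃ p : S × A, (s, a, p.1, p.2) ∈ M.writes := by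
      rcases (hF (s, fun _ => a) _).2 rfl with ⟨δ, hm, -⟩ | ⟨_, b, hw, rfl, -⟩
      · exact absurd ⟨δ, _, hm⟩ hmove
      · exact ⟨(_, b), hw⟩
    choose w hw using hwrite
    exact ⟨.write w, fun τ => ((hF _ _).1 (Or.inr ⟨τ 0, _, hw (τ 0), rfl, rfl⟩)).symm⟩

lemma injective_of_reversible (hF : ∀ c c', TMStep M c c' ↔ c' = F c) (hrev : Reversible M) :
    Injective F := fun c₁ c₂ h =>
  hrev.2 c₁ c₂ (F c₁) ((hF _ _).2 rfl) ((hF _ _).2 h)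

end Machine

section TwoV

variable {ι : Type*}

def rectMap (D : ι → List Bool × List Bool) (p : ι × Cantor × Cantor) : Cantor × Cantor :=
  (cat (D p.1).1 p.2.1, cat (D p.1).2 p.2.2)

lemma continuous_rectMap [TopologicalSpace ι] [DiscreteTopology ι]
    (D : ι → List Bool × List Bool) : Continuous (rectMap D) :=
  continuous_prod_of_discrete_left.2 fun i =>
    show Continuous fun q : Cantor × Cantor => (cat (D i).1 q.1, cat (D i).2 q.2) from
      ((continuous_cat _).comp continuous_fst).prodMk ((continuous_cat _).comp continuous_snd)

lemma isSubdivision_of_bijective_rectMap [Fintype ι] {D : ι → List Bool × List Bool}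
    (h : Bijective (rectMap D)) : IsSubdivision (Finset.univ.toList.map D) := by
  refine ⟨Set.eq_univ_of_forall fun p => ?_, ?_⟩
  · obtain ⟨⟨i, ψ, ω⟩, rfl⟩ := h.2 p
    exact Set.mem_biUnion (List.mem_map_of_mem (Finset.mem_toList.2 (Finset.mem_univ i)))
      ⟨⟨ψ, rfl⟩, ω, rfl⟩
  · refine List.pairwise_map.2 ((Finset.nodup_toList _).imp fun {i j} hij => ?_)
    rw [Set.disjoint_left]
    rintro _ ⟨⟨ψ, hψ⟩, ω, hω⟩ ⟨⟨ψ', hψ'⟩, ω', hω'⟩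
    exact hij <| congrArg Prod.fst <|
      @h.1 (i, ψ, ω) (j, ψ', ω') (Prod.ext (hψ.symm.trans hψ') (hω.symm.trans hω'))

/-- Continuity of `f` and `f⁻¹` comes for free: `rectMap D` and `rectMap E` are continuous
surjections from a compact space onto a Hausdorff one, hence quotient maps. -/
theorem memTwoV_of_rectMap [Fintype ι] [TopologicalSpace ι] [DiscreteTopology ι]
    (f : Equiv.Perm (Cantor × Cantor)) {D E : ι → List Bool × List Bool}
    (hD : Bijective (rectMap D)) (hf : ∀ p, f (rectMap D p) = rectMap E p) : MemTwoV f := by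
  have hfD : f ∘ rectMap D = rectMap E := funext hf
  have hE : Bijective (rectMap E) := hfD ▸ f.bijective.comp hD
  have hfE : f.symm ∘ rectMap E = rectMap D := by
    rw [← hfD, ← comp_assoc, Equiv.symm_comp_self, id_comp]
  refine ⟨?_, ?_, Finset.univ.toList.map fun i => (D i, E i), ?_, ?_, fun r hr ψ ω => ?_⟩
  · exact (IsQuotientMap.of_surjective_continuous hD.2 (continuous_rectMap D)).continuous_iff.2
      (hfD ▸ continuous_rectMap E)
  · exact (IsQuotientMap.of_surjective_continuous hE.2 (continuous_rectMap E)).continuous_iff.2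
      (hfE ▸ continuous_rectMap D)
  · rw [List.map_map]
    exact isSubdivision_of_bijective_rectMap hD
  · rw [List.map_map]
    exact isSubdivision_of_bijective_rectMap hE
  · obtain ⟨i, -, rfl⟩ := List.mem_map.1 hr
    exact hf (i, ψ, ω)

end TwoV

section Windows

variable {m n : ℕ} {σ : Fin m → List Bool} {α : Fin n → List Bool}

/-- The rectangle `R(σ_s α_b, α_a)` of configurations in state `s` scanning `a`, with `b` to
the left of the head. -/
def windowDom (σ : Fin m → List Bool) (α : Fin n → List Bool) (p : Fin m × Fin n × Fin n) :
    List Bool × List Bool :=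
  (σ p.1 ++ α p.2.2, α p.2.1)

def windowImage (σ : Fin m → List Bool) (α : Fin n → List Bool)
    (R : Fin m → Rule (Fin m) (Fin n)) (p : Fin m × Fin n × Fin n) : List Bool × List Bool :=
  let w := (R p.1).window p.2.1 p.2.2
  (σ w.1 ++ w.2.1.flatMap α, w.2.2.flatMap α)

lemma bijective_rectMap_windowDom (hσ : Bijective (uncurry fun i => cat (σ i)))
    (hα : Bijective (uncurry fun i => cat (α i))) : Bijective (rectMap (windowDom σ α)) := by
  refine ⟨?_, fun p => ?_⟩
  · rintro ⟨⟨s, a, b⟩, ψ, ω⟩ ⟨⟨s', a', b'⟩, ψ', ω'⟩ h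
    simp only [rectMap, windowDom, cat_append, Prod.mk.injEq] at h
    obtain ⟨rfl, h₁⟩ := Prod.ext_iff.1 (@hσ.1 (s, cat (α b) ψ) (s', cat (α b') ψ') h.1)
    obtain ⟨rfl, rfl⟩ := Prod.ext_iff.1 (@hα.1 (b, ψ) (b', ψ') h₁)
    obtain ⟨rfl, rfl⟩ := Prod.ext_iff.1 (@hα.1 (a, ω) (a', ω') h.2)
    rfl
  · obtain ⟨⟨s, x⟩, hx⟩ := hσ.2 p.1
    obtain ⟨⟨b, ψ⟩, rfl⟩ := hα.2 x
    obtain ⟨⟨a, ω⟩, hω⟩ := hα.2 p.2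
    refine ⟨((s, a, b), ψ, ω), Prod.ext ?_ hω⟩
    simpa [rectMap, windowDom, cat_append] using hx

lemma apply_rectMap_windowDom (hαne : ∀ i, α i ≠ []) (hε : Surjective (epsConcat α))
    {F : Fin m × (ℤ → Fin n) → Fin m × (ℤ → Fin n)} {R : Fin m → Rule (Fin m) (Fin n)}
    (hR : ∀ s τ, F (s, τ) = (R s).run τ) {f : Cantor × Cantor → Cantor × Cantor}
    (hf : ∀ c, f (Phi σ α c) = Phi σ α (F c)) (p : Fin m × Fin n × Fin n)
    (ψ ω : Cantor) :
    f (rectMap (windowDom σ α) (p, ψ, ω)) = rectMap (windowImage σ α R) (p, ψ, ω) := by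
  obtain ⟨s, a, b⟩ := p
  obtain ⟨l, rfl⟩ : ∃ l : Stream' (Fin n), epsConcat α l = ψ := hε ψ
  obtain ⟨r, rfl⟩ : ∃ r : Stream' (Fin n), epsConcat α r = ω := hε ω
  have hdom : rectMap (windowDom σ α) ((s, a, b), epsConcat α l, epsConcat α r) =
      Phi σ α (s, joinTape ([b] ++ₛ l) ([a] ++ₛ r)) := by
    rw [Phi_joinTape_append hαne]
    simp [rectMap, windowDom]
  rw [hdom, hf, hR]
  exact (congrArg (Phi σ α) ((R s).run_joinTape a b l r)).trans
    (Phi_joinTape_append hαne _ _ _ _ _)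

end Windows

theorem turing_machine_gives_element_of_2V_general {m n : ℕ}
    (M : TuringMachine (Fin m) (Fin n)) (hrev : Reversible M)
    (F : Fin m × (ℤ → Fin n) → Fin m × (ℤ → Fin n))
    (hF : ∀ c c', TMStep M c c' ↔ c' = F c)
    (σ : Fin m → List Bool)
    (hσcover : (⋃ i, dyadicI (σ i)) = Set.univ)
    (hσdisj : Pairwise fun i j => Disjoint (dyadicI (σ i)) (dyadicI (σ j)))
    (α : Fin n → List Bool) (hαne : ∀ i, α i ≠ [])
    (hαcover : (⋃ i, dyadicI (α i)) = Set.univ)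
    (hαdisj : Pairwise fun i j => Disjoint (dyadicI (α i)) (dyadicI (α j))) :
    Function.Bijective (Phi σ α) ∧
      ∃ f : Equiv.Perm (Cantor × Cantor),
        (∀ c, f (Phi σ α c) = Phi σ α (F c)) ∧ MemTwoV f := by
  have hσ := bijective_uncurry_cat hσcover hσdisj
  have hα := bijective_uncurry_cat hαcover hαdisj
  have hε := bijective_epsConcat hαne hα
  have hΦ := bijective_Phi hσ hε
  choose R hR using exists_rule hF
  have hFbij : Bijective F := by
    have hFinj := injective_of_reversible hF hrev
    refine ⟨hFinj, ?_⟩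
    rw [show F = fun c => (R c.1).run c.2 from funext fun c => hR c.1 c.2] at hFinj ⊢
    exact Rule.surjective_run_of_injective R hFinj
  let f := (Equiv.ofBijective _ hΦ).permCongr (Equiv.ofBijective F hFbij)
  have hf (c : Fin m × (ℤ → Fin n)) : f (Phi σ α c) = Phi σ α (F c) := by
    simp [f, Equiv.permCongr_apply]
  exact ⟨hΦ, f, hf, memTwoV_of_rectMap f (bijective_rectMap_windowDom hσ hα)
    fun ⟨p, ψ, ω⟩ => apply_rectMap_windowDom hαne hε.2 hR hf p ψ ω⟩

/-- Given a complete, reversible Turing machine with transition function `F`, and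
encodings of the states and tape symbols by partitions of Cantor space into dyadic
intervals, the configuration encoding `Φ` is a bijection onto `C²`, and the conjugate
map `f_T = Φ ∘ F ∘ Φ⁻¹` is an element of the Brin–Thompson group `2V`. -/
theorem turing_machine_gives_element_of_2V {m n : ℕ}
    (M : TuringMachine (Fin m) (Fin n)) (hcomp : Complete M) (hrev : Reversible M)
    (F : Fin m × (ℤ → Fin n) → Fin m × (ℤ → Fin n))
    (hF : ∀ c c', TMStep M c c' ↔ c' = F c)
    (σ : Fin m → List Bool) (hσne : ∀ i, σ i ≠ [])
    (hσcover : (⋃ i, dyadicI (σ i)) = Set.univ)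
    (hσdisj : Pairwise fun i j => Disjoint (dyadicI (σ i)) (dyadicI (σ j)))
    (α : Fin n → List Bool) (hαne : ∀ i, α i ≠ [])
    (hαcover : (⋃ i, dyadicI (α i)) = Set.univ)
    (hαdisj : Pairwise fun i j => Disjoint (dyadicI (α i)) (dyadicI (α j))) :
    Function.Bijective (Phi σ α) ∧
      ∃ f : Equiv.Perm (Cantor × Cantor),
        (∀ c, f (Phi σ α c) = Phi σ α (F c)) ∧ MemTwoV f :=
  turing_machine_gives_element_of_2V_general M hrev F hF σ hσcover hσdisj α hαne hαcover hαdisj
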